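/- arXiv:2501.06886 — 5 statements merged into one kernel-verified Lean document; each statement's English description precedes it below -/
import Mathlib

section
/- For n, m ≥ 2 with n ≠ m, the integrated Legendre polynomials satisfy the orthogonality relation ∫_{-1}^1 Q_n(x) Q_m(x) / (1 - x²) dx = 0. -/
open MeasureTheory intervalIntegral Finset

/-- The `n`-th Legendre polynomial (Rodrigues formula), normalized so `legendreP n 1 = 1`. -/
noncomputable def legendreP (n : ℕ) : ℝ → ℝ :=
  fun x => (1 / ((2 : ℝ) ^ n * n.factorial)) * iteratedDeriv n (fun t => (t ^ 2 - 1) ^ n) x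

/-- The integrated Legendre polynomial `Q_n(x) = -∫ₓ¹ L_{n-1}(t) dt`. -/
noncomputable def Qleg (n : ℕ) : ℝ → ℝ :=
  fun x => -∫ t in x..(1 : ℝ), legendreP (n - 1) t

open Polynomial

noncomputable def Wp (n : ℕ) : ℝ[X] := ((X : ℝ[X]) ^ 2 - 1) ^ n

noncomputable def legP (n : ℕ) : ℝ[X] :=
  C (1 / ((2 : ℝ) ^ n * n.factorial)) * derivative^[n] (Wp n)

noncomputable def antider (p : ℝ[X]) : ℝ[X] :=
  ∑ i ∈ Finset.range (p.natDegree + 1), C (p.coeff i / (i + 1)) * X ^ (i + 1)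

lemma derivative_antider (p : ℝ[X]) : derivative (antider p) = p := by
  rw [antider, map_sum]
  conv_rhs => rw [p.as_sum_range_C_mul_X_pow]
  refine Finset.sum_congr rfl fun i _ => ?_
  rw [derivative_C_mul, derivative_X_pow]
  simp only [Nat.add_sub_cancel, Nat.cast_add, Nat.cast_one]
  rw [← mul_assoc, ← C_mul, div_mul_cancel₀ _ (by positivity : ((i:ℝ)+1) ≠ 0)]

lemma natDegree_antider (p : ℝ[X]) : (antider p).natDegree ≤ p.natDegree + 1 := by
  apply Polynomial.natDegree_sum_le_of_forall_le
  intro i hi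
  refine le_trans (natDegree_mul_le) ?_
  simp only [natDegree_C, natDegree_X_pow, zero_add]
  exact Nat.succ_le_succ (Finset.mem_range_succ_iff.mp hi)

lemma poly_ftc (p : ℝ[X]) (a b : ℝ) :
    ∫ x in a..b, (derivative p).eval x = p.eval b - p.eval a := by
  exact intervalIntegral.integral_eq_sub_of_hasDerivAt (fun x _ => p.hasDerivAt x)
    ((derivative p).continuous.intervalIntegrable a b)

lemma Wp_factor (n : ℕ) : ∀ j, j ≤ n → ∃ r : ℝ[X],
    derivative^[j] (Wp n) = ((X : ℝ[X]) ^ 2 - 1) ^ (n - j) * r := by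
  intro j
  induction j with
  | zero => intro _; exact ⟨1, by simp [Wp]⟩
  | succ j ih =>
    intro hj
    obtain ⟨r, hr⟩ := ih (Nat.le_of_succ_le hj)
    refine ⟨(C ((n - j : ℕ) : ℝ)) * (2 * X) * r + ((X : ℝ[X]) ^ 2 - 1) * derivative r, ?_⟩
    have hnj : n - j = (n - (j + 1)) + 1 := by omega
    rw [Function.iterate_succ_apply', hr, hnj, derivative_mul, derivative_pow]
    simp only [derivative_sub, derivative_X_pow, derivative_one, Nat.add_sub_cancel, sub_zero,
      Polynomial.C_eq_natCast]
    ring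

lemma eval_iter_deriv_Wp (n j : ℕ) (hj : j < n) (x : ℝ) (hx : x ^ 2 = 1) :
    (derivative^[j] (Wp n)).eval x = 0 := by
  obtain ⟨r, hr⟩ := Wp_factor n j hj.le
  have h1 : 1 ≤ n - j := by omega
  rw [hr]
  simp [hx, zero_pow (by omega : n - j ≠ 0)]

lemma ortho_aux (n : ℕ) : ∀ k, k ≤ n → ∀ p : ℝ[X], p.natDegree < k →
    ∫ x in (-1:ℝ)..1, p.eval x * (derivative^[k] (Wp n)).eval x = 0 := by
  intro k
  induction k with
  | zero => intro _ p hp; exact absurd hp (Nat.not_lt_zero _)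
  | succ k ih =>
    intro hk p hp
    have hint1 : IntervalIntegrable (fun x => (derivative p).eval x *
        (derivative^[k] (Wp n)).eval x) volume (-1:ℝ) 1 :=
      (((derivative p).continuous).mul ((derivative^[k] (Wp n)).continuous)).intervalIntegrable _ _
    have hint2 : IntervalIntegrable (fun x => p.eval x *
        (derivative^[k+1] (Wp n)).eval x) volume (-1:ℝ) 1 :=
      ((p.continuous).mul ((derivative^[k+1] (Wp n)).continuous)).intervalIntegrable _ _
    have hftc := poly_ftc (p * derivative^[k] (Wp n)) (-1) 1
    rw [derivative_mul] at hftc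
    simp only [eval_add, eval_mul, ← Function.iterate_succ_apply' derivative] at hftc
    rw [intervalIntegral.integral_add hint1 hint2] at hftc
    have hb1 : (derivative^[k] (Wp n)).eval 1 = 0 :=
      eval_iter_deriv_Wp n k (by omega) 1 (by norm_num)
    have hb2 : (derivative^[k] (Wp n)).eval (-1) = 0 :=
      eval_iter_deriv_Wp n k (by omega) (-1) (by norm_num)
    rw [hb1, hb2] at hftc
    simp only [mul_zero, sub_zero] at hftc
    by_cases hdp : derivative p = 0
    · simpa [hdp] using hftc
    · have : ∫ x in (-1:ℝ)..1, (derivative p).eval x * (derivative^[k] (Wp n)).eval x = 0 := by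
        apply ih (by omega)
        have hnd : p.natDegree ≠ 0 := by
          intro h
          apply hdp
          rw [Polynomial.eq_C_of_natDegree_eq_zero h, derivative_C]
        exact lt_of_lt_of_le (Polynomial.natDegree_derivative_lt hnd) (by omega)
      rw [this, zero_add] at hftc
      linarith [hftc]

lemma iteratedDeriv_eval (k : ℕ) (p : ℝ[X]) :
    iteratedDeriv k (fun x => p.eval x) = fun x => (derivative^[k] p).eval x := by
  induction k with
  | zero => simp
  | succ k ih =>
    rw [iteratedDeriv_succ, ih, Function.iterate_succ_apply']
    funext x
    exact Polynomial.deriv (p := derivative^[k] p)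

lemma legendreP_eval (n : ℕ) (x : ℝ) : legendreP n x = (legP n).eval x := by
  have h : (fun t : ℝ => (t ^ 2 - 1) ^ n) = fun t => (Wp n).eval t := by
    funext t; simp [Wp]
  rw [legendreP, legP, h, iteratedDeriv_eval]
  simp

noncomputable def qp (n : ℕ) : ℝ[X] :=
  antider (legP (n - 1)) - C ((antider (legP (n - 1))).eval 1)

lemma derivative_qp (n : ℕ) : derivative (qp n) = legP (n - 1) := by
  rw [qp, derivative_sub, derivative_C, sub_zero, derivative_antider]

lemma Qleg_eval (n : ℕ) (x : ℝ) : Qleg n x = (qp n).eval x := by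
  rw [Qleg]
  have h : ∀ t : ℝ, legendreP (n-1) t = (derivative (qp n)).eval t := by
    intro t; rw [derivative_qp, legendreP_eval]
  simp only [h]
  rw [poly_ftc]
  simp [qp]

lemma qp_eval_one (n : ℕ) : (qp n).eval 1 = 0 := by simp [qp]

lemma natDegree_Wp (n : ℕ) : (Wp n).natDegree ≤ 2 * n := by
  rw [Wp]
  refine le_trans natDegree_pow_le ?_
  have h2 : ((X:ℝ[X])^2 - 1).natDegree ≤ 2 :=
    le_trans (natDegree_sub_le _ _) (by simp)
  nlinarith

lemma natDegree_legP (n : ℕ) : (legP n).natDegree ≤ n := by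
  refine le_trans natDegree_mul_le ?_
  simp only [natDegree_C, zero_add]
  refine le_trans (Polynomial.natDegree_iterate_derivative _ _) ?_
  have := natDegree_Wp n
  omega

lemma natDegree_qp (n : ℕ) (hn : 1 ≤ n) : (qp n).natDegree ≤ n := by
  refine le_trans (natDegree_sub_le _ _) ?_
  simp only [natDegree_C, max_le_iff]
  constructor
  · refine le_trans (natDegree_antider _) ?_
    have := natDegree_legP (n-1)
    omega
  · omega

lemma ortho_legP (k : ℕ) (p : ℝ[X]) (hp : p.natDegree < k) :
    ∫ x in (-1:ℝ)..1, p.eval x * (legP k).eval x = 0 := by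
  simp only [legP, eval_mul, eval_C]
  have : ∀ x : ℝ, p.eval x * (1 / ((2:ℝ)^k * k.factorial) * (derivative^[k] (Wp k)).eval x)
      = (1 / ((2:ℝ)^k * k.factorial)) * (p.eval x * (derivative^[k] (Wp k)).eval x) := by
    intro x; ring
  simp only [this]
  rw [intervalIntegral.integral_const_mul, ortho_aux k k le_rfl p hp, mul_zero]

lemma qp_eval_neg_one (n : ℕ) (hn : 2 ≤ n) : (qp n).eval (-1) = 0 := by
  have h := Qleg_eval n (-1)
  rw [Qleg] at h
  have h2 : ∀ t : ℝ, legendreP (n-1) t = (1:ℝ[X]).eval t * (legP (n-1)).eval t := by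
    intro t; rw [legendreP_eval]; simp
  rw [← h]
  simp only [h2]
  rw [ortho_legP (n-1) 1 (by simp; omega)]
  simp

lemma X2_dvd_qp (n : ℕ) (hn : 2 ≤ n) : ((X : ℝ[X]) ^ 2 - 1) ∣ qp n := by
  have h1 : (X - C (1:ℝ)) ∣ qp n := dvd_iff_isRoot.2 (qp_eval_one n)
  have h2 : (X - C (-1:ℝ)) ∣ qp n := dvd_iff_isRoot.2 (qp_eval_neg_one n hn)
  have hcop : IsCoprime (X - C (1:ℝ)) (X - C (-1:ℝ)) :=
    isCoprime_X_sub_C_of_isUnit_sub (by norm_num)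
  have := hcop.mul_dvd h1 h2
  have heq : (X - C (1:ℝ)) * (X - C (-1:ℝ)) = (X : ℝ[X]) ^ 2 - 1 := by
    simp only [map_one, map_neg]
    ring
  rwa [heq] at this

lemma half (n m : ℕ) (hm : 2 ≤ m) (hmn : m < n) (u v : ℝ[X])
    (hu : qp n = ((X : ℝ[X]) ^ 2 - 1) * u) (hv : qp m = ((X : ℝ[X]) ^ 2 - 1) * v) :
    ∫ x in (-1:ℝ)..1, (1 - x ^ 2) * (u.eval x * v.eval x) = 0 := by
  by_cases hv0 : v = 0
  · simp [hv0]
  have hdegv : v.natDegree ≤ m - 2 := by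
    have hq : (qp m).natDegree = 2 + v.natDegree := by
      rw [hv, natDegree_mul (fun h => by have := congrArg (eval 2) h; norm_num at this) hv0]
      congr 1
      compute_degree!
    have := natDegree_qp m (by omega)
    omega
  set P := antider v with hP
  have hdegP : P.natDegree < n - 1 := by
    rw [hP]
    have := natDegree_antider v
    omega
  -- FTC for qp n * P
  have hftc := poly_ftc (qp n * P) (-1) 1
  rw [derivative_mul, derivative_qp, derivative_antider] at hftc
  simp only [eval_add, eval_mul] at hftc
  rw [qp_eval_one, qp_eval_neg_one n (by omega)] at hftc
  simp only [zero_mul, sub_zero] at hftc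
  have hint1 : IntervalIntegrable (fun x => (legP (n-1)).eval x * P.eval x)
      volume (-1:ℝ) 1 :=
    (((legP (n-1)).continuous).mul (P.continuous)).intervalIntegrable _ _
  have hint2 : IntervalIntegrable (fun x => (qp n).eval x * v.eval x) volume (-1:ℝ) 1 :=
    (((qp n).continuous).mul (v.continuous)).intervalIntegrable _ _
  rw [intervalIntegral.integral_add hint1 hint2] at hftc
  have ho : ∫ x in (-1:ℝ)..1, (legP (n-1)).eval x * P.eval x = 0 := by
    have := ortho_legP (n-1) P hdegP
    simpa [mul_comm] using this
  rw [ho, zero_add] at hftc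
  have hintegrand : ∀ x : ℝ, (1 - x ^ 2) * (u.eval x * v.eval x)
      = -((qp n).eval x * v.eval x) := by
    intro x
    rw [hu]
    simp only [eval_mul, eval_sub, eval_pow, eval_X, eval_one]
    ring
  simp only [hintegrand]
  rw [intervalIntegral.integral_neg, hftc, neg_zero]

lemma main_lt (n m : ℕ) (hn : 2 ≤ n) (hm : 2 ≤ m) (h : m < n) :
    ∫ x in (-1 : ℝ)..1, Qleg n x * Qleg m x / (1 - x ^ 2) = 0 := by
  obtain ⟨u, hu⟩ := X2_dvd_qp n hn
  obtain ⟨v, hv⟩ := X2_dvd_qp m hm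
  have hae : ∀ᵐ x : ℝ, Qleg n x * Qleg m x / (1 - x ^ 2)
      = (1 - x ^ 2) * (u.eval x * v.eval x) := by
    have hE : volume ({-1, 1} : Set ℝ) = 0 := (Set.toFinite _).measure_zero _
    rw [MeasureTheory.ae_iff]
    refine measure_mono_null (fun x hx => ?_) hE
    simp only [Set.mem_setOf_eq] at hx
    by_contra hxE
    apply hx
    simp only [Set.mem_insert_iff, Set.mem_singleton_iff, not_or] at hxE
    obtain ⟨hx1, hx2⟩ := hxE
    have hx12 : 1 - x ^ 2 ≠ 0 := by
      intro hc
      have : x = 1 ∨ x = -1 := by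
        have : (x - 1) * (x + 1) = 0 := by nlinarith
        rcases mul_eq_zero.1 this with h' | h'
        · left; linarith
        · right; linarith
      tauto
    rw [Qleg_eval, Qleg_eval, hu, hv]
    simp only [eval_mul, eval_sub, eval_pow, eval_X, eval_one]
    field_simp
    ring
  rw [intervalIntegral.integral_congr_ae (hae.mono fun x hx _ => hx)]
  exact half n m hm h u v hu hv

theorem Qleg_orthogonal (n m : ℕ) (hn : 2 ≤ n) (hm : 2 ≤ m) (hnm : n ≠ m) :
    ∫ x in (-1 : ℝ)..1, Qleg n x * Qleg m x / (1 - x ^ 2) = 0 := by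
  rcases hnm.lt_or_gt with h | h
  · have := main_lt m n hm hn h
    have hcomm : ∀ x : ℝ, Qleg n x * Qleg m x / (1 - x ^ 2)
        = Qleg m x * Qleg n x / (1 - x ^ 2) := by
      intro x; rw [mul_comm]
    simp only [hcomm]
    exact this
  · exact main_lt n m hn hm h
end

section
/- For n ≥ 2, the squared weighted norm of the integrated Legendre polynomial is ∫_{-1}^1 Q_n(x)² / (1 - x²) dx = 2 / (n(n-1)(2n-1)). -/
open MeasureTheory intervalIntegral Finset

namespace LegAux

open Polynomial

/-- `(x²-1)^m` as a polynomial. -/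
noncomputable def u (m : ℕ) : ℝ[X] := ((X : ℝ[X]) ^ 2 - 1) ^ m

/-- The Legendre polynomial as a `Polynomial ℝ`. -/
noncomputable def Pl (m : ℕ) : ℝ[X] :=
  C (1 / ((2 : ℝ) ^ m * m.factorial)) * derivative^[m] (u m)

lemma iteratedDeriv_eval (p : ℝ[X]) (k : ℕ) :
    iteratedDeriv k (fun t => p.eval t) = fun t => (derivative^[k] p).eval t := by
  induction k with
  | zero => simp
  | succ k ih =>
    rw [iteratedDeriv_succ, ih, Function.iterate_succ_apply']
    funext t
    exact (Polynomial.hasDerivAt _ t).deriv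

lemma legendreP_eq (m : ℕ) (x : ℝ) : legendreP m x = (Pl m).eval x := by
  have h : (fun t : ℝ => (t ^ 2 - 1) ^ m) = fun t => (u m).eval t := by
    funext t; simp [u]
  rw [legendreP, h, iteratedDeriv_eval, Pl]
  simp [mul_comm]

/-- vanishing of low-order derivatives of `u m` at `±1` -/
lemma eval_iterate_derivative_u (m j : ℕ) (hj : j < m) {x : ℝ} (hx : x ^ 2 = 1) :
    (derivative^[j] (u m)).eval x = 0 := by
  have hfac : u m = (X - C x) ^ m * (X + C x) ^ m := by
    rw [u, ← mul_pow]
    congr 1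
    have h : (X - C x) * (X + C x) = X ^ 2 - C (x ^ 2) := by
      rw [map_pow]; ring
    rw [h, hx, map_one]
  rw [hfac, iterate_derivative_mul, eval_finset_sum]
  apply Finset.sum_eq_zero
  intro i hi
  simp only [Finset.mem_range] at hi
  have h1 : m - (j - i) ≠ 0 := by omega
  rw [iterate_derivative_X_sub_pow]
  simp [sub_self, zero_pow h1]

lemma iterate_derivative_X_mul (p : ℝ[X]) (k : ℕ) :
    derivative^[k + 1] (X * p) =
      X * derivative^[k + 1] p + ((k : ℝ[X]) + 1) * derivative^[k] p := by
  induction k with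
  | zero => simp [derivative_mul]; ring
  | succ k ih =>
    rw [Function.iterate_succ_apply' derivative (k + 1) (X * p), ih]
    simp only [derivative_add, derivative_mul, derivative_X, derivative_one, derivative_natCast,
      Function.iterate_succ_apply']
    push_cast
    ring

lemma iterate_derivative_sq_mul (p : ℝ[X]) (k : ℕ) :
    derivative^[k + 2] (((X : ℝ[X]) ^ 2 - 1) * p) =
      ((X : ℝ[X]) ^ 2 - 1) * derivative^[k + 2] p
        + 2 * ((k : ℝ[X]) + 2) * (X * derivative^[k + 1] p)
        + ((k : ℝ[X]) + 2) * ((k : ℝ[X]) + 1) * derivative^[k] p := by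
  induction k with
  | zero =>
    simp only [Function.iterate_succ_apply, Function.iterate_zero_apply, Function.iterate_one]
    simp [derivative_mul, derivative_pow, map_ofNat]
    ring
  | succ k ih =>
    rw [show k + 1 + 2 = (k + 2) + 1 from rfl, Function.iterate_succ_apply'
      derivative (k + 2) _, ih]
    simp only [derivative_add, derivative_sub, derivative_mul, derivative_pow, derivative_X,
      derivative_one, derivative_natCast, derivative_ofNat, map_ofNat]
    simp only [show k + 2 = (k + 1) + 1 from rfl, Function.iterate_succ_apply']
    push_cast
    have hC : (C (2:ℝ)) = 2 := map_ofNat C 2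
    rw [hC]
    ring

/-- The Legendre ODE (for the unnormalized Rodrigues polynomial). -/
lemma ode (m : ℕ) (hm : 1 ≤ m) :
    derivative (((X : ℝ[X]) ^ 2 - 1) * derivative (derivative^[m] (u m))) =
      ((m : ℝ[X]) * ((m : ℝ[X]) + 1)) * derivative^[m] (u m) := by
  obtain ⟨k, rfl⟩ : ∃ k, m = k + 1 := ⟨m - 1, (Nat.succ_pred_eq_of_pos hm).symm⟩
  have key : ((X:ℝ[X]) ^ 2 - 1) * derivative (u (k+1)) =
      C (2 * ((k : ℝ) + 1)) * (X * u (k+1)) := by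
    rw [u, derivative_pow]
    simp only [Nat.add_sub_cancel, derivative_sub, derivative_one, derivative_X_pow,
      sub_zero, Nat.cast_add, Nat.cast_one, map_mul, map_add, map_one]
    ring
  have h2 := congrArg (fun q => derivative^[k+2] q) key
  rw [iterate_derivative_sq_mul, iterate_derivative_C_mul,
    show k + 2 = (k+1) + 1 from rfl, iterate_derivative_X_mul (u (k+1)) (k+1)] at h2
  simp only [← Function.iterate_succ_apply derivative] at h2
  simp only [show k + 2 = (k+1) + 1 from rfl, Function.iterate_succ_apply'] at h2 ⊢
  simp only [derivative_mul, derivative_sub, derivative_one, derivative_X_pow, sub_zero,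
    Nat.cast_ofNat, C_eq_natCast, map_mul, map_add, map_one, Nat.cast_add, Nat.cast_one,
    map_ofNat] at h2 ⊢
  push_cast at h2 ⊢
  linear_combination h2

lemma ode_Pl (m : ℕ) (hm : 1 ≤ m) :
    derivative (((X : ℝ[X]) ^ 2 - 1) * derivative (Pl m)) =
      ((m : ℝ[X]) * ((m : ℝ[X]) + 1)) * Pl m := by
  have h := ode m hm
  have hc : ∀ (a : ℝ) (p : ℝ[X]), derivative (C a * p) = C a * derivative p := by
    intro a p; rw [derivative_mul, derivative_C, zero_mul, zero_add]
  rw [Pl, hc, mul_left_comm, hc, h]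
  ring

lemma poly_ftc (p : ℝ[X]) (a b : ℝ) :
    ∫ x in a..b, (derivative p).eval x = p.eval b - p.eval a := by
  apply intervalIntegral.integral_eq_sub_of_hasDerivAt
  · intro x _; exact Polynomial.hasDerivAt p x
  · exact ((Polynomial.continuous _).intervalIntegrable _ _)

lemma poly_ibp (p q : ℝ[X]) (a b : ℝ) :
    ∫ x in a..b, (derivative p).eval x * q.eval x =
      p.eval b * q.eval b - p.eval a * q.eval a -
        ∫ x in a..b, p.eval x * (derivative q).eval x := by
  have h := poly_ftc (p * q) a b
  rw [derivative_mul] at h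
  have : ∀ x, ((derivative p * q + p * derivative q).eval x) =
      (derivative p).eval x * q.eval x + p.eval x * (derivative q).eval x := by
    intro x; simp
  rw [intervalIntegral.integral_congr (g := fun x => (derivative p).eval x * q.eval x
      + p.eval x * (derivative q).eval x) (fun x _ => this x)] at h
  rw [intervalIntegral.integral_add (f := fun x => (derivative p).eval x * q.eval x)
      (g := fun x => p.eval x * (derivative q).eval x) (((Polynomial.continuous _).mul
      (Polynomial.continuous _)).intervalIntegrable _ _)
    (((Polynomial.continuous _).mul (Polynomial.continuous _)).intervalIntegrable _ _)] at h
  simp only [Polynomial.eval_mul] at h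
  linarith

/-- `∫_{-1}^1 (1-x²)^m dx = 2^(2m+1) (m!)² / (2m+1)!`. -/
lemma integral_one_sub_sq_pow (m : ℕ) :
    ∫ x in (-1:ℝ)..1, (1 - x ^ 2) ^ m =
      2 ^ (2 * m + 1) * (m.factorial : ℝ) ^ 2 / (2 * m + 1).factorial := by
  induction m with
  | zero => simp; norm_num
  | succ m ih =>
    -- express the integrand via polynomials
    have hpoly : ∀ (k : ℕ) (x : ℝ), ((1 - (X:ℝ[X]) ^ 2) ^ k).eval x = (1 - x ^ 2) ^ k := by
      intro k x; simp
    -- integration by parts with p = X, q = (1-X²)^(m+1)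
    have hibp := poly_ibp (X : ℝ[X]) ((1 - (X:ℝ[X]) ^ 2) ^ (m+1)) (-1) 1
    have hderq : derivative ((1 - (X:ℝ[X]) ^ 2) ^ (m+1)) =
        C (-(2 * ((m:ℝ) + 1))) * (X * (1 - (X:ℝ[X]) ^ 2) ^ m) := by
      rw [derivative_pow]
      simp only [Nat.add_sub_cancel, derivative_sub, derivative_one, derivative_X_pow,
        zero_sub, Nat.cast_add, Nat.cast_one, map_mul, map_add, map_one, map_neg,
        Nat.cast_ofNat, map_ofNat]
      ring
    rw [hderq] at hibp
    simp only [derivative_X, Polynomial.eval_one, one_mul, Polynomial.eval_pow,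
      Polynomial.eval_sub, Polynomial.eval_X, Polynomial.eval_mul, Polynomial.eval_C,
      Polynomial.eval_one] at hibp
    norm_num at hibp
    -- hibp : ∫ (1-x²)^(m+1) = - ∫ x * (-(2(m+1)) * (x * (1-x²)^m))
    have hsplit : ∀ x : ℝ, x * (2 * ((m:ℝ) + 1) * (x * (1 - x ^ 2) ^ m)) =
        (2 * ((m:ℝ) + 1)) * ((1 - x ^ 2) ^ m) - (2 * ((m:ℝ) + 1)) * ((1 - x ^ 2) ^ (m+1)) := by
      intro x; ring
    rw [intervalIntegral.integral_congr (g := fun x => (2 * ((m:ℝ) + 1)) * ((1 - x ^ 2) ^ m)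
        - (2 * ((m:ℝ) + 1)) * ((1 - x ^ 2) ^ (m+1))) (fun x _ => hsplit x)] at hibp
    have hint1 : IntervalIntegrable (fun x : ℝ => (2 * ((m:ℝ) + 1)) * ((1 - x ^ 2) ^ m))
        volume (-1) 1 := by
      apply Continuous.intervalIntegrable; continuity
    have hint2 : IntervalIntegrable (fun x : ℝ => (2 * ((m:ℝ) + 1)) * ((1 - x ^ 2) ^ (m+1)))
        volume (-1) 1 := by
      apply Continuous.intervalIntegrable; continuity
    rw [intervalIntegral.integral_sub hint1 hint2, intervalIntegral.integral_const_mul,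
      intervalIntegral.integral_const_mul] at hibp
    set I1 := ∫ x in (-1:ℝ)..1, (1 - x ^ 2) ^ (m + 1) with hI1
    rw [ih] at hibp
    -- solve for I1
    have hsolve : I1 = 2 * ((m:ℝ) + 1) / (2 * ((m:ℝ) + 1) + 1) *
        (2 ^ (2 * m + 1) * (m.factorial : ℝ) ^ 2 / (2 * m + 1).factorial) := by
      have hpos : (2 * ((m:ℝ) + 1) + 1) ≠ 0 := by positivity
      field_simp at hibp ⊢
      linarith [hibp]
    rw [hsolve]
    have hfac1 : ((2 * (m + 1) + 1).factorial : ℝ) =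
        (2 * (m:ℝ) + 3) * (2 * (m:ℝ) + 2) * ((2 * m + 1).factorial : ℝ) := by
      have : 2 * (m + 1) + 1 = (2 * m + 1) + 1 + 1 := by ring
      rw [this, Nat.factorial_succ, Nat.factorial_succ]
      push_cast
      ring
    have hfac2 : ((m + 1).factorial : ℝ) = ((m:ℝ) + 1) * (m.factorial : ℝ) := by
      rw [Nat.factorial_succ]; push_cast; ring
    rw [hfac1, hfac2]
    have h1 : ((2 * m + 1).factorial : ℝ) ≠ 0 := by positivity
    have h2 : (m.factorial : ℝ) ≠ 0 := by positivity
    field_simp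
    ring

/-- top derivative is the constant (2m)!. -/
lemma u_monic (m : ℕ) : (u m).Monic := by
  have h2 : ((X : ℝ[X]) ^ 2 - 1).Monic := by
    have := Polynomial.monic_X_pow_sub_C (1 : ℝ) (two_ne_zero)
    simpa using this
  exact h2.pow m

lemma u_natDegree (m : ℕ) : (u m).natDegree = 2 * m := by
  rw [u, Polynomial.natDegree_pow]
  have : ((X : ℝ[X]) ^ 2 - 1).natDegree = 2 := by
    have := Polynomial.natDegree_X_pow_sub_C (n := 2) (r := (1:ℝ))
    simpa using this
  rw [this, mul_comm]

lemma top_derivative (m : ℕ) : derivative^[2 * m] (u m) = C ((2 * m).factorial : ℝ) := by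
  have hd : (derivative^[2 * m] (u m)).natDegree = 0 := by
    have := Polynomial.natDegree_iterate_derivative (u m) (2 * m)
    rw [u_natDegree] at this
    omega
  have := Polynomial.eq_C_of_natDegree_le_zero (le_of_eq hd)
  rw [this, Polynomial.coeff_iterate_derivative]
  congr 1
  simp only [zero_add, Nat.descFactorial_self]
  have hlc : (u m).coeff (2 * m) = 1 := by
    have := (u_monic m).leadingCoeff
    rwa [Polynomial.leadingCoeff, u_natDegree] at this
  rw [hlc]
  simp

/-- `∫_{-1}^1 L_m(x)² dx = 2/(2m+1)`. -/
lemma norm_sq_Pl (m : ℕ) :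
    ∫ x in (-1:ℝ)..1, ((Pl m).eval x) ^ 2 = 2 / (2 * (m : ℝ) + 1) := by
  set J : ℕ → ℝ := fun k =>
    ∫ x in (-1:ℝ)..1, (derivative^[m - k] (u m)).eval x * (derivative^[m + k] (u m)).eval x
    with hJ
  have hstep : ∀ k, k < m → J k = - J (k + 1) := by
    intro k hk
    have hidx : m - (k + 1) + 1 = m - k := by omega
    have hder : derivative (derivative^[m - (k+1)] (u m)) = derivative^[m - k] (u m) := by
      rw [← Function.iterate_succ_apply' derivative (m - (k+1)) (u m),
        show (m - (k+1)).succ = m - k from by omega]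
    have hder2 : derivative (derivative^[m + k] (u m)) = derivative^[m + (k+1)] (u m) := by
      rw [← Function.iterate_succ_apply' derivative (m + k) (u m),
        show (m + k).succ = m + (k+1) from by omega]
    have hibp := poly_ibp (derivative^[m - (k+1)] (u m)) (derivative^[m + k] (u m)) (-1) 1
    rw [hder, hder2] at hibp
    have hv1 : (derivative^[m - (k+1)] (u m)).eval 1 = 0 :=
      eval_iterate_derivative_u m _ (by omega) (by norm_num)
    have hv2 : (derivative^[m - (k+1)] (u m)).eval (-1) = 0 :=
      eval_iterate_derivative_u m _ (by omega) (by norm_num)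
    rw [hv1, hv2] at hibp
    simp only [zero_mul, sub_zero, zero_sub] at hibp
    rw [hJ]
    simp only
    rw [hibp]
  have hiter : ∀ k, k ≤ m → J 0 = (-1 : ℝ) ^ k * J k := by
    intro k
    induction k with
    | zero => intro _; simp
    | succ k ih =>
      intro hk
      rw [ih (by omega), hstep k (by omega)]
      ring
  have hJm : J m = ((2 * m).factorial : ℝ) * ((-1:ℝ)) ^ m *
      (2 ^ (2 * m + 1) * (m.factorial : ℝ) ^ 2 / (2 * m + 1).factorial) := by
    rw [hJ]
    simp only [Nat.sub_self, Function.iterate_zero_apply, ← two_mul, top_derivative]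
    have hcongr : ∀ x ∈ Set.uIcc (-1:ℝ) 1, (u m).eval x * (C ((2*m).factorial : ℝ)).eval x =
        ((2*m).factorial : ℝ) * ((-1:ℝ)) ^ m * (1 - x ^ 2) ^ m := by
      intro x _
      simp only [Polynomial.eval_C, u, Polynomial.eval_pow, Polynomial.eval_sub,
        Polynomial.eval_one, Polynomial.eval_X]
      rw [show (x ^ 2 - 1 : ℝ) = (-1) * (1 - x ^ 2) by ring, mul_pow]
      ring
    rw [intervalIntegral.integral_congr hcongr, intervalIntegral.integral_const_mul,
      integral_one_sub_sq_pow]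
  have hJ0 : ∫ x in (-1:ℝ)..1, ((Pl m).eval x) ^ 2 =
      (1 / ((2:ℝ) ^ m * m.factorial)) ^ 2 * J 0 := by
    rw [hJ]
    simp only [Nat.sub_zero, Nat.add_zero]
    rw [← intervalIntegral.integral_const_mul]
    apply intervalIntegral.integral_congr
    intro x _
    simp only [Pl, Polynomial.eval_mul, Polynomial.eval_C]
    ring
  have h1 : ((2 * m + 1).factorial : ℝ) = (2 * (m:ℝ) + 1) * ((2 * m).factorial : ℝ) := by
    rw [Nat.factorial_succ]; push_cast; ring
  have h2 : (m.factorial : ℝ) ≠ 0 := by positivity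
  have h3 : ((2 * m).factorial : ℝ) ≠ 0 := by positivity
  have h4 : (2 * (m:ℝ) + 1) ≠ 0 := by positivity
  have h5 : ((-1:ℝ)) ^ m * ((-1:ℝ)) ^ m = 1 := by
    rw [← pow_add, ← two_mul, pow_mul]; norm_num
  have hJ0m : J 0 = ((2*m).factorial : ℝ) *
      (2 ^ (2*m+1) * (m.factorial:ℝ)^2 / ((2*m+1).factorial : ℝ)) := by
    rw [hiter m le_rfl, hJm,
      show ((-1:ℝ)^m * (((2*m).factorial:ℝ) * (-1:ℝ)^m *
        (2^(2*m+1) * (m.factorial:ℝ)^2 / (((2*m+1).factorial : ℕ):ℝ)))) =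
        ((-1:ℝ)^m*(-1:ℝ)^m) * (((2*m).factorial:ℝ) *
        (2^(2*m+1) * (m.factorial:ℝ)^2 / (((2*m+1).factorial : ℕ):ℝ))) from by ring, h5, one_mul]
  rw [hJ0, hJ0m, h1]
  have h6 : (2:ℝ) ^ m ≠ 0 := by positivity
  field_simp
  ring

end LegAux

theorem Qleg_norm_sq (n : ℕ) (hn : 2 ≤ n) :
    ∫ x in (-1 : ℝ)..1, (Qleg n x) ^ 2 / (1 - x ^ 2) =
      2 / ((n : ℝ) * (n - 1) * (2 * n - 1)) := by
  open Polynomial LegAux in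
  obtain ⟨k, rfl⟩ : ∃ k, n = k + 2 := ⟨n - 2, by omega⟩
  set m : ℕ := k + 1 with hm
  have hm1 : 1 ≤ m := by omega
  set c : ℝ := (m : ℝ) * ((m : ℝ) + 1) with hc
  have hcpos : 0 < c := by positivity
  have hcne : c ≠ 0 := ne_of_gt hcpos
  have hcast : ((m:ℝ[X]) * ((m:ℝ[X]) + 1)) = C c := by
    simp [hc, map_mul, map_add, C_eq_natCast]
  have hkey : derivative ((1 - (X:ℝ[X])^2) * derivative (Pl m)) = -(C c * Pl m) := by
    rw [show (1 - (X:ℝ[X])^2) * derivative (Pl m) =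
      -(((X:ℝ[X])^2 - 1) * derivative (Pl m)) from by ring, derivative_neg, ode_Pl m hm1, hcast]
  set Fq : ℝ[X] := C (-(1/c)) * ((1 - (X:ℝ[X])^2) * derivative (Pl m)) with hFq
  have hCmul : ∀ (a : ℝ) (p : ℝ[X]), derivative (C a * p) = C a * derivative p := by
    intro a p; rw [derivative_mul, derivative_C, zero_mul, zero_add]
  have hderFq : derivative Fq = Pl m := by
    rw [hFq, hCmul, hkey, map_neg, neg_mul_neg, ← mul_assoc, ← map_mul,
      one_div, inv_mul_cancel₀ hcne, map_one, one_mul]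
  have hQ : ∀ x : ℝ, Qleg (k+2) x = Fq.eval x := by
    intro x
    have hint : ∫ t in x..(1:ℝ), (Pl m).eval t = Fq.eval 1 - Fq.eval x := by
      refine intervalIntegral.integral_eq_sub_of_hasDerivAt (f := fun t => Fq.eval t)
        (f' := fun t => (Pl m).eval t) (fun t _ => ?_)
        ((Polynomial.continuous _).intervalIntegrable _ _)
      have := Polynomial.hasDerivAt Fq t
      rwa [hderFq] at this
    have hFq1 : Fq.eval 1 = 0 := by simp [hFq]
    rw [Qleg, show (k + 2) - 1 = m from rfl]
    rw [intervalIntegral.integral_congr (g := fun t => (Pl m).eval t)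
      (fun t _ => legendreP_eq m t), hint, hFq1]
    ring
  set g : ℝ[X] := C ((1/c)^2) * ((1 - (X:ℝ[X])^2) * (derivative (Pl m))^2) with hg
  have hpt : ∀ x : ℝ, (Qleg (k+2) x) ^ 2 / (1 - x ^ 2) = g.eval x := by
    intro x
    rw [hQ x, hFq, hg]
    simp only [Polynomial.eval_mul, Polynomial.eval_C, Polynomial.eval_sub,
      Polynomial.eval_one, Polynomial.eval_pow, Polynomial.eval_X]
    by_cases h : (1 - x ^ 2) = 0
    · rw [h]; simp
    · field_simp
  rw [intervalIntegral.integral_congr (g := fun x => g.eval x) (fun x _ => hpt x)]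
  -- integration by parts
  have hibp := poly_ibp ((1 - (X:ℝ[X])^2) * derivative (Pl m)) (Pl m) (-1) 1
  rw [hkey] at hibp
  have hb1 : ((1 - (X:ℝ[X])^2) * derivative (Pl m)).eval 1 = 0 := by simp
  have hb2 : ((1 - (X:ℝ[X])^2) * derivative (Pl m)).eval (-1) = 0 := by simp
  rw [hb1, hb2] at hibp
  simp only [zero_mul, sub_zero, zero_sub] at hibp
  have hL : (∫ x in (-1:ℝ)..1, (-(C c * Pl m)).eval x * (Pl m).eval x) =
      -c * (2 / (2 * (m:ℝ) + 1)) := by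
    rw [intervalIntegral.integral_congr
      (g := fun x => -c * (((Pl m).eval x) ^ 2)) (by intro x _; simp; ring),
      intervalIntegral.integral_const_mul, norm_sq_Pl]
  rw [hL] at hibp
  -- hibp : -c * (2/(2m+1)) = - ∫ ((1-x²) Pl') * Pl'
  have hgint : (∫ x in (-1:ℝ)..1, g.eval x) =
      (1/c)^2 * ∫ x in (-1:ℝ)..1,
        ((1 - (X:ℝ[X])^2) * derivative (Pl m)).eval x * (derivative (Pl m)).eval x := by
    rw [← intervalIntegral.integral_const_mul]
    apply intervalIntegral.integral_congr
    intro x _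
    simp only [hg, Polynomial.eval_mul, Polynomial.eval_C, Polynomial.eval_sub,
      Polynomial.eval_one, Polynomial.eval_pow, Polynomial.eval_X]
    ring
  have hint2 : (∫ x in (-1:ℝ)..1,
      ((1 - (X:ℝ[X])^2) * derivative (Pl m)).eval x * (derivative (Pl m)).eval x) =
      c * (2 / (2 * (m:ℝ) + 1)) := by linarith [hibp]
  rw [hgint, hint2]
  have hmr : (m : ℝ) = (k : ℝ) + 1 := by push_cast [hm]; ring
  rw [hc, hmr]
  push_cast
  have e : ((k:ℝ) + 2) * ((k:ℝ) + 2 - 1) * (2 * ((k:ℝ) + 2) - 1) =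
      ((k:ℝ) + 2) * (((k:ℝ) + 1) * (2 * (k:ℝ) + 3)) := by ring
  rw [e]
  have hk1 : ((k:ℝ) + 1) ≠ 0 := by positivity
  have hk2 : ((k:ℝ) + 2) ≠ 0 := by positivity
  have hk3 : (2 * (k:ℝ) + 3) ≠ 0 := by positivity
  have hk4 : (2 * ((k:ℝ) + 1) + 1) ≠ 0 := by positivity
  field_simp
  ring
end

section
/- For n ≥ 2, the integrated Legendre polynomial admits the Rodrigues-type representation Q_n(x) = (x² - 1) / (2^{n-1} n! (n-1)) · d^n/dx^n [(x² - 1)^{n-1}]. -/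
open MeasureTheory intervalIntegral Finset

open Polynomial


lemma C2 : (C (2:ℝ) : ℝ[X]) = 2 := by simpa using C_eq_natCast (R:=ℝ) 2

lemma itadd (k : ℕ) (p q : ℝ[X]) :
    derivative^[k] (p + q) = derivative^[k] p + derivative^[k] q := by
  induction k generalizing p q with
  | zero => simp
  | succ k ih => simp [Function.iterate_succ_apply, ih]

lemma itnat (j k : ℕ) (q : ℝ[X]) :
    derivative^[j] ((k : ℝ[X]) * q) = (k : ℝ[X]) * derivative^[j] q := by
  rw [← C_eq_natCast]; exact iterate_derivative_C_mul _ _ _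

lemma iterD_X_mul (k : ℕ) (q : ℝ[X]) :
    derivative^[k+1] (X * q) =
      X * derivative^[k+1] q + ((k+1 : ℕ) : ℝ[X]) * derivative^[k] q := by
  induction k generalizing q with
  | zero => simp [derivative_mul]; ring
  | succ k ih =>
    rw [Function.iterate_succ_apply]
    have h1 : derivative (X * q) = q + X * derivative q := by
      simp [derivative_mul]
    rw [h1, itadd, ih, ← Function.iterate_succ_apply, ← Function.iterate_succ_apply]
    push_cast
    ring

lemma iterD_sq_mul (k : ℕ) (q : ℝ[X]) :
    derivative^[k+2] ((X^2 - 1) * q) =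
      (X^2 - 1) * derivative^[k+2] q + 2 * ((k+2 : ℕ) : ℝ[X]) * X * derivative^[k+1] q
        + (((k+2)*(k+1) : ℕ) : ℝ[X]) * derivative^[k] q := by
  induction k generalizing q with
  | zero =>
    show derivative (derivative _) = _
    simp [derivative_mul, C2]
    ring
  | succ k ih =>
    rw [Function.iterate_succ_apply]
    have h1 : derivative ((X^2-1) * q) = ((2:ℕ):ℝ[X]) * (X * q) + (X^2-1) * derivative q := by
      simp [derivative_mul, C2]
      ring
    rw [h1, itadd, itnat, iterD_X_mul (k+1), ih, ← Function.iterate_succ_apply,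
      ← Function.iterate_succ_apply, ← Function.iterate_succ_apply]
    push_cast
    ring

/-- The Legendre ODE identity in differentiated form. -/
lemma key_ode (k : ℕ) :
    (X^2 - 1) * derivative^[k+3] ((X^2-1)^(k+1) : ℝ[X])
      + 2 * X * derivative^[k+2] ((X^2-1)^(k+1) : ℝ[X])
      = (((k+2)*(k+1) : ℕ) : ℝ[X]) * derivative^[k+1] ((X^2-1)^(k+1) : ℝ[X]) := by
  set p : ℝ[X] := (X^2-1)^(k+1) with hp
  have base : (X^2 - 1) * derivative p = ((2*(k+1) : ℕ) : ℝ[X]) * (X * p) := by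
    rw [hp, derivative_pow]
    simp only [Nat.add_sub_cancel, derivative_sub, derivative_X_pow, derivative_one, C_eq_natCast]
    push_cast
    ring
  have key := congrArg (derivative^[k+2]) base
  rw [iterD_sq_mul, itnat, iterD_X_mul (k+1), ← Function.iterate_succ_apply,
    ← Function.iterate_succ_apply, ← Function.iterate_succ_apply] at key
  push_cast at key ⊢
  linear_combination key

lemma iter_eval (p : ℝ[X]) (k : ℕ) :
    iteratedDeriv k (fun x => p.eval x) = fun x => (derivative^[k] p).eval x := by
  induction k with
  | zero => simp
  | succ k ih =>
    rw [iteratedDeriv_succ, ih, Function.iterate_succ_apply']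
    funext x
    simp [Polynomial.deriv]

theorem Qleg_rodrigues (n : ℕ) (hn : 2 ≤ n) (x : ℝ) :
    Qleg n x = (x ^ 2 - 1) / ((2 : ℝ) ^ (n - 1) * n.factorial * (n - 1)) *
      iteratedDeriv n (fun t => (t ^ 2 - 1) ^ (n - 1)) x := by
  obtain ⟨k, rfl⟩ : ∃ k, n = k + 2 := ⟨n - 2, by omega⟩
  have h1 : k + 2 - 1 = k + 1 := rfl
  simp only [h1]
  set p : ℝ[X] := (X^2-1)^(k+1) with hp
  have hf : (fun t : ℝ => (t ^ 2 - 1) ^ (k+1)) = fun t => p.eval t := by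
    funext t; simp [hp]
  set Cst : ℝ := (2 : ℝ) ^ (k+1) * (k+2).factorial * ((k+1 : ℕ) : ℝ) with hC
  have hCpos : 0 < Cst := by positivity
  set g : ℝ → ℝ := fun t => ((X^2-1) * derivative^[k+2] p).eval t / Cst with hg
  -- legendreP (k+1) as polynomial eval
  have hL : legendreP (k+1) = fun t =>
      (1 / ((2:ℝ)^(k+1) * (k+1).factorial)) * (derivative^[k+1] p).eval t := by
    funext t
    rw [legendreP, hf, iter_eval]
  have hderiv : ∀ t : ℝ, HasDerivAt g (legendreP (k+1) t) t := by
    intro t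
    have h := (((X^2-1) * derivative^[k+2] p).hasDerivAt t).div_const Cst
    have heq : (derivative ((X^2-1) * derivative^[k+2] p)).eval t / Cst = legendreP (k+1) t := by
      have hd : derivative ((X^2-1) * derivative^[k+2] p)
          = (((k+2)*(k+1) : ℕ) : ℝ[X]) * derivative^[k+1] p := by
        rw [derivative_mul, ← key_ode k, ← Function.iterate_succ_apply' derivative (k+2)]
        have : derivative (X^2 - 1 : ℝ[X]) = 2 * X := by
          simp [derivative_sub]
          norm_num [C2]
        rw [this]
        ring
      rw [hd, hL]
      simp only [eval_mul, eval_natCast]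
      have hfac : ((k+2).factorial : ℝ) = (k+2) * (k+1).factorial := by
        rw [Nat.factorial_succ]; push_cast; ring
      rw [hC]
      have h2 : ((k+1).factorial : ℝ) ≠ 0 := by positivity
      have h3 : (2:ℝ)^(k+1) ≠ 0 := by positivity
      field_simp [hfac]
      push_cast [hfac]
      ring
    rwa [heq] at h
  have hcont : IntervalIntegrable (legendreP (k+1)) volume x 1 := by
    rw [hL]
    exact ((continuous_const.mul ((derivative^[k+1] p).continuous)).intervalIntegrable _ _)
  have hint : ∫ t in x..(1:ℝ), legendreP (k+1) t = g 1 - g x :=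
    integral_eq_sub_of_hasDerivAt (fun t _ => hderiv t) hcont
  have hQ : Qleg (k+2) x = g x - g 1 := by
    rw [Qleg, h1, hint]; ring
  have hg1 : g 1 = 0 := by simp [hg]
  rw [hQ, hg1, sub_zero, hg, hf, iter_eval]
  have hd : ((k+2 : ℕ):ℝ) - 1 = ((k+1:ℕ):ℝ) := by push_cast; ring_nf
  rw [hd, div_mul_eq_mul_div]
  simp only [eval_mul, eval_sub, eval_pow, eval_X, eval_one]
  rw [hC]
end

section
/- For n ≥ 2 and all real x, the identity (x² - 1) · d^n/dx^n[(x² - 1)^{n-1}] = n(n-1) · d^{n-2}/dx^{n-2}[(x² - 1)^{n-1}] holds. -/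
open MeasureTheory intervalIntegral Finset

private lemma hFsmooth (m : ℕ) : ContDiff ℝ ⊤ (fun t : ℝ => (t ^ 2 - 1) ^ (m + 1)) :=
  (((contDiff_id.pow 2).sub contDiff_const).pow _)

private lemma hD (m k : ℕ) (x : ℝ) :
    HasDerivAt (iteratedDeriv k (fun t : ℝ => (t ^ 2 - 1) ^ (m + 1)))
      (iteratedDeriv (k + 1) (fun t : ℝ => (t ^ 2 - 1) ^ (m + 1)) x) x := by
  have hd : Differentiable ℝ (iteratedDeriv k (fun t : ℝ => (t ^ 2 - 1) ^ (m + 1))) :=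
    (hFsmooth m).differentiable_iteratedDeriv k (by simp)
  have := (hd x).hasDerivAt
  rwa [iteratedDeriv_succ]

private lemma base (m : ℕ) (y : ℝ) :
    (y ^ 2 - 1) * iteratedDeriv 1 (fun t : ℝ => (t ^ 2 - 1) ^ (m + 1)) y
      = 2 * ((m : ℝ) + 1) * y * (y ^ 2 - 1) ^ (m + 1) := by
  have h : HasDerivAt (fun t : ℝ => (t ^ 2 - 1) ^ (m + 1))
      ((((m : ℕ) + 1 : ℕ) : ℝ) * (y ^ 2 - 1) ^ m * (2 * y ^ (2 - 1))) y := by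
    exact (((hasDerivAt_pow 2 y).sub_const 1).pow (m + 1)).congr_deriv (by norm_num)
  rw [iteratedDeriv_one, h.deriv]
  push_cast
  ring

private lemma aux (m : ℕ) : ∀ (j : ℕ) (x : ℝ),
    (x ^ 2 - 1) * iteratedDeriv (j + 2) (fun t : ℝ => (t ^ 2 - 1) ^ (m + 1)) x
      = 2 * ((m : ℝ) - j) * x * iteratedDeriv (j + 1) (fun t : ℝ => (t ^ 2 - 1) ^ (m + 1)) x
        + ((j : ℝ) + 1) * (2 * (m : ℝ) + 2 - j)
          * iteratedDeriv j (fun t : ℝ => (t ^ 2 - 1) ^ (m + 1)) x := by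
  set F : ℝ → ℝ := fun t => (t ^ 2 - 1) ^ (m + 1) with hF
  intro j
  induction j with
  | zero =>
    intro x
    have hL : HasDerivAt (fun y => (y ^ 2 - 1) * iteratedDeriv 1 F y)
        ((2 * x ^ (2 - 1)) * iteratedDeriv 1 F x + (x ^ 2 - 1) * iteratedDeriv 2 F x) x :=
      ((hasDerivAt_pow 2 x).sub_const 1).mul (hD m 1 x)
    have hR : HasDerivAt (fun y => 2 * ((m : ℝ) + 1) * y * F y)
        (2 * ((m : ℝ) + 1) * 1 * F x + 2 * ((m : ℝ) + 1) * x * iteratedDeriv 1 F x) x := by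
      have h1 := ((hasDerivAt_id x).const_mul (2 * ((m : ℝ) + 1))).mul (hD m 0 x)
      rw [iteratedDeriv_zero] at h1
      convert h1 using 2 <;> rfl
    have heq : (fun y => (y ^ 2 - 1) * iteratedDeriv 1 F y)
        = (fun y => 2 * ((m : ℝ) + 1) * y * F y) := funext fun y => base m y
    rw [heq] at hL
    have h := hL.unique hR
    rw [iteratedDeriv_zero] at *
    push_cast
    linear_combination h
  | succ j ih =>
    intro x
    have hL : HasDerivAt (fun y => (y ^ 2 - 1) * iteratedDeriv (j + 2) F y)
        ((2 * x ^ (2 - 1)) * iteratedDeriv (j + 2) F x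
          + (x ^ 2 - 1) * iteratedDeriv (j + 3) F x) x :=
      ((hasDerivAt_pow 2 x).sub_const 1).mul (hD m (j + 2) x)
    have hR : HasDerivAt (fun y => 2 * ((m : ℝ) - j) * y * iteratedDeriv (j + 1) F y
          + ((j : ℝ) + 1) * (2 * (m : ℝ) + 2 - j) * iteratedDeriv j F y)
        ((2 * ((m : ℝ) - j) * 1 * iteratedDeriv (j + 1) F x
            + 2 * ((m : ℝ) - j) * x * iteratedDeriv (j + 2) F x)
          + ((j : ℝ) + 1) * (2 * (m : ℝ) + 2 - j) * iteratedDeriv (j + 1) F x) x := by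
      have h1 := (((hasDerivAt_id x).const_mul (2 * ((m : ℝ) - j))).mul (hD m (j + 1) x))
      have h2 := (hD m j x).const_mul (((j : ℝ) + 1) * (2 * (m : ℝ) + 2 - j))
      have := h1.add h2
      convert this using 2 <;> rfl
    have heq : (fun y => (y ^ 2 - 1) * iteratedDeriv (j + 2) F y)
        = (fun y => 2 * ((m : ℝ) - j) * y * iteratedDeriv (j + 1) F y
          + ((j : ℝ) + 1) * (2 * (m : ℝ) + 2 - j) * iteratedDeriv j F y) := funext fun y => ih y
    rw [heq] at hL
    have h := hL.unique hR
    push_cast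
    linear_combination h

theorem deriv_identity (n : ℕ) (hn : 2 ≤ n) (x : ℝ) :
    (x ^ 2 - 1) * iteratedDeriv n (fun t => (t ^ 2 - 1) ^ (n - 1)) x =
      (n : ℝ) * (n - 1) * iteratedDeriv (n - 2) (fun t => (t ^ 2 - 1) ^ (n - 1)) x := by
  obtain ⟨j, rfl⟩ := Nat.exists_eq_add_of_le hn
  have h1 : 2 + j - 1 = j + 1 := by omega
  have h2 : 2 + j - 2 = j := by omega
  have h3 : 2 + j = j + 2 := by omega
  rw [h1, h2, h3]
  have := aux j j x
  push_cast
  linear_combination this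
end

section
/- The value of the Legendre polynomial at zero satisfies L_n(0) = (1/2^n) Σ_{k=0}^n (-1)^{n-k} (C(n,k))², and in particular L_{2n}(0) = (-1)^n C(2n,n)/4^n while L_{2n+1}(0) = 0. -/
open MeasureTheory intervalIntegral Finset

open Polynomial in
private lemma iteratedDeriv_polyEval (n : ℕ) (p : ℝ[X]) (x : ℝ) :
    iteratedDeriv n (fun t => p.eval t) x = (derivative^[n] p).eval x := by
  induction n generalizing p with
  | zero => simp
  | succ n ih =>
    rw [iteratedDeriv_succ', Function.iterate_succ_apply]
    have h : deriv (fun t => p.eval t) = fun t => p.derivative.eval t :=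
      funext fun t => p.deriv
    rw [h, ih]

open Polynomial in
private lemma legendreP_zero_eq (n : ℕ) :
    legendreP n 0 = (1 / (2 : ℝ) ^ n) * ((X ^ 2 - 1 : ℝ[X]) ^ n).coeff n := by
  have hfun : (fun t : ℝ => (t ^ 2 - 1) ^ n) = fun t => ((X ^ 2 - 1 : ℝ[X]) ^ n).eval t := by
    funext t; simp
  rw [legendreP, hfun, iteratedDeriv_polyEval, ← Polynomial.coeff_zero_eq_eval_zero,
    Polynomial.coeff_iterate_derivative]
  have h2 : ((n.factorial : ℝ)) ≠ 0 := Nat.cast_ne_zero.mpr n.factorial_ne_zero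
  simp only [Nat.zero_add, Nat.descFactorial_self, smul_eq_mul, Nat.cast_id]
  field_simp
  ring

open Polynomial in
private lemma key_coeff_sum (n : ℕ) :
    ((X ^ 2 - 1 : ℝ[X]) ^ n).coeff n =
      ∑ k ∈ Finset.range (n + 1), (-1 : ℝ) ^ (n - k) * (n.choose k : ℝ) ^ 2 := by
  have hfac : (X ^ 2 - 1 : ℝ[X]) ^ n = (X + C (-1)) ^ n * (X + C 1) ^ n := by
    rw [← mul_pow]; simp; ring
  rw [hfac, Polynomial.coeff_mul, Finset.Nat.sum_antidiagonal_eq_sum_range_succ_mk]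
  refine Finset.sum_congr rfl fun k hk => ?_
  rw [Finset.mem_range, Nat.lt_succ_iff] at hk
  rw [coeff_X_add_C_pow, coeff_X_add_C_pow, Nat.choose_symm hk, one_pow]
  ring

open Polynomial in
private lemma key_coeff_if (n : ℕ) :
    ((X ^ 2 - 1 : ℝ[X]) ^ n).coeff n =
      if 2 ∣ n then (-1 : ℝ) ^ (n - n / 2) * (n.choose (n / 2) : ℝ) else 0 := by
  have hexp : (X ^ 2 - 1 : ℝ[X]) ^ n = Polynomial.expand ℝ 2 ((X + C (-1)) ^ n) := by
    rw [map_pow, map_add, Polynomial.expand_X, Polynomial.expand_C]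
    simp [sub_eq_add_neg]
  rw [hexp, Polynomial.coeff_expand (by norm_num)]
  split_ifs with h
  · rw [coeff_X_add_C_pow]
  · rfl

theorem legendreP_at_zero (n : ℕ) :
    (legendreP n 0 = (1 / (2 : ℝ) ^ n) *
        ∑ k ∈ Finset.range (n + 1), (-1 : ℝ) ^ (n - k) * (n.choose k : ℝ) ^ 2) ∧
    (∀ m : ℕ, legendreP (2 * m) 0 = (-1 : ℝ) ^ m * ((2 * m).choose m : ℝ) / 4 ^ m) ∧
    (∀ m : ℕ, legendreP (2 * m + 1) 0 = 0) := by
  refine ⟨by rw [legendreP_zero_eq, key_coeff_sum], fun m => ?_, fun m => ?_⟩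
  · rw [legendreP_zero_eq, key_coeff_if]
    rw [if_pos ⟨m, rfl⟩]
    have h1 : 2 * m / 2 = m := by omega
    have h2 : 2 * m - m = m := by omega
    rw [h1, h2]
    have h4 : ((2 : ℝ) ^ (2 * m)) = 4 ^ m := by
      rw [pow_mul]; norm_num
    rw [h4]; ring
  · rw [legendreP_zero_eq, key_coeff_if, if_neg (by omega), mul_zero]
end
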